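/- arXiv:1402.5211 — 3 statements merged into one kernel-verified Lean document; each statement's English description precedes it below -/
import Mathlib

section
/- For n ≥ 3, there are exactly n permutations of {1,...,n} avoiding all of the consecutive patterns 321, 312, 213, and their inversion numbers are exactly 0, 1, 2, ..., n−1 (each achieved once), so the inversion generating polynomial equals 1 + q + q^2 + ⋯ + q^{n−1}. -/
open Polynomial
open scoped Classical

/-- The number of inversions of a permutation of `{1,…,n}` (as a permutation of `Fin n`). -/
def inversions {n : ℕ} (π : Equiv.Perm (Fin n)) : ℕ :=
  (Finset.univ.filter (fun p : Fin n × Fin n => p.1 < p.2 ∧ π p.2 < π p.1)).card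

/-- `π` avoids, as a consecutive pattern, the length-3 pattern described by the
order relation `pat` on three consecutive entries. -/
def AvoidsC {n : ℕ} (pat : ℕ → ℕ → ℕ → Prop) (π : Equiv.Perm (Fin n)) : Prop :=
  ∀ i : Fin n, ∀ h : (i : ℕ) + 2 < n,
    ¬ pat (π i) (π ⟨(i : ℕ) + 1, by omega⟩) (π ⟨(i : ℕ) + 2, h⟩)

def P321 (a b c : ℕ) : Prop := c < b ∧ b < a
def P312 (a b c : ℕ) : Prop := b < c ∧ c < a
def P231 (a b c : ℕ) : Prop := c < a ∧ a < b
def P213 (a b c : ℕ) : Prop := b < a ∧ a < c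
def P132 (a b c : ℕ) : Prop := a < c ∧ c < b
def P123 (a b c : ℕ) : Prop := a < b ∧ b < c

/-- The inversion generating polynomial `Σ_{π ∈ A} q^{inv(π)}`. -/
noncomputable def genPoly {n : ℕ} (A : Finset (Equiv.Perm (Fin n))) : Polynomial ℕ :=
  ∑ π ∈ A, X ^ inversions π

noncomputable def Av9 (n : ℕ) : Finset (Equiv.Perm (Fin n)) :=
  Finset.univ.filter (fun π => AvoidsC P321 π ∧ AvoidsC P312 π ∧ AvoidsC P213 π)

/-! If a consecutive triple `a b c` of distinct values has a descent `a > b`, then `c` lies below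
`b`, between `b` and `a`, or above `a`: the triple is a 321, 312 or 213. So the permutations in
question are exactly those increasing on their first `n - 1` positions, and such a permutation is
determined by its last value `k`: it is the cycle `Fin.cycleIcc k (last _)`, whose inversions are
the pairs `(i, n - 1)` with `k ≤ i < n - 1`. Hence the inversion generating polynomial is
`1 + q + ⋯ + q ^ (n - 1)`; its coefficients and its value at `1` give the other two claims. -/

open Finset Fin Equiv

theorem genPoly_eval_one {n : ℕ} (A : Finset (Perm (Fin n))) : (genPoly A).eval 1 = #A := by
  simp [genPoly, eval_finsetSum]

theorem genPoly_coeff {n : ℕ} (A : Finset (Perm (Fin n))) (m : ℕ) :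
    (genPoly A).coeff m = #(A.filter (fun π => inversions π = m)) := by
  rw [card_filter, genPoly, finsetSum_coeff]
  simp only [coeff_X_pow, eq_comm]

theorem P321_or_P312_or_P213_iff {a b c : ℕ} (hac : a ≠ c) (hbc : b ≠ c) :
    P321 a b c ∨ P312 a b c ∨ P213 a b c ↔ b < a := by
  unfold P321 P312 P213
  omega

theorem avoidsC_P321_P312_P213_iff {n : ℕ} (π : Perm (Fin n)) :
    (AvoidsC P321 π ∧ AvoidsC P312 π ∧ AvoidsC P213 π) ↔
      ∀ (i : Fin n) (h : (i : ℕ) + 2 < n), π i < π ⟨i + 1, by omega⟩ := by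
  have hval : ∀ {x y : Fin n}, (x : ℕ) ≠ y → (π x : ℕ) ≠ π y := fun hxy h =>
    hxy (congrArg Fin.val (π.injective (Fin.ext h)))
  simp only [AvoidsC, ← forall_and]
  refine forall_congr' fun i => forall_congr' fun h => ?_
  rw [← not_or, ← not_or, P321_or_P312_or_P213_iff (hval (by simp)) (hval (by simp)), not_lt,
    Fin.lt_def, (hval (by simp)).le_iff_lt]

theorem mem_Av9_iff {m : ℕ} (π : Perm (Fin (m + 2))) :
    π ∈ Av9 (m + 2) ↔ StrictMono (π ∘ castSucc) := by
  rw [Av9, mem_filter, avoidsC_P321_P312_P213_iff, Fin.strictMono_iff_lt_succ]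
  simp only [mem_univ, true_and, Function.comp_apply]
  exact ⟨fun h i => h i.castSucc.castSucc (by simp), fun h i hi => h ⟨i, by omega⟩⟩

section cycleIccLast

variable {m : ℕ}

theorem cycleIcc_last_apply_val (k j : Fin (m + 1)) :
    (cycleIcc k (last m) j : ℕ) =
      if (j : ℕ) = m then (k : ℕ) else if (j : ℕ) < k then (j : ℕ) else (j : ℕ) + 1 := by
  rcases lt_or_ge j k with hjk | hkj
  · rw [cycleIcc_of_lt hjk, if_neg (by omega), if_pos (Fin.lt_def.1 hjk)]
  · rw [cycleIcc_of_le_of_le hkj (le_last j)]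
    by_cases hj : j = last m
    · simp [hj]
    · rw [if_neg hj, if_neg (by simpa [Fin.ext_iff] using hj),
        if_neg (not_lt.2 (Fin.le_def.1 hkj)), val_add_one_of_lt (lt_last_iff_ne_last.2 hj)]

theorem strictMono_cycleIcc_last_comp_castSucc (k : Fin (m + 1)) :
    StrictMono (cycleIcc k (last m) ∘ castSucc) := by
  intro i j hij
  rw [Fin.lt_def] at hij
  simp only [Function.comp_apply, Fin.lt_def, cycleIcc_last_apply_val, val_castSucc]
  have := j.isLt
  split_ifs <;> omega

theorem eq_cycleIcc_last_of_strictMono {σ : Perm (Fin (m + 1))}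
    (hσ : StrictMono (σ ∘ castSucc)) : σ = cycleIcc (σ (last m)) (last m) := by
  set k := σ (last m)
  have hcard : #(univ.erase k) = m := by simp
  have hmem : ∀ τ : Perm (Fin (m + 1)), τ (last m) = k →
      ∀ i : Fin m, τ (castSucc i) ∈ univ.erase k := fun τ hτ i =>
    mem_erase.2 ⟨fun h => (castSucc_lt_last i).ne (τ.injective (h.trans hτ.symm)), mem_univ _⟩
  have hinit : σ ∘ castSucc = cycleIcc k (last m) ∘ castSucc :=
    (orderEmbOfFin_unique hcard (hmem σ rfl) hσ).trans
      (orderEmbOfFin_unique hcard (hmem _ (cycleIcc_of_last (le_last k)))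
        (strictMono_cycleIcc_last_comp_castSucc k)).symm
  ext j
  induction j using lastCases with
  | last => rw [cycleIcc_of_last (le_last k)]
  | cast i => exact congrArg Fin.val (congrFun hinit i)

theorem inversions_cycleIcc_last (k : Fin (m + 1)) : inversions (cycleIcc k (last m)) = m - k := by
  have hset : univ.filter (fun p : Fin (m + 1) × Fin (m + 1) =>
      p.1 < p.2 ∧ cycleIcc k (last m) p.2 < cycleIcc k (last m) p.1) =
      Ico k (last m) ×ˢ {last m} := by
    ext ⟨a, b⟩
    simp only [mem_filter, mem_univ, true_and, mem_product, mem_Ico, mem_singleton, Fin.lt_def,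
      Fin.le_def, Fin.ext_iff, cycleIcc_last_apply_val, val_last]
    have := a.isLt; have := b.isLt
    split_ifs <;> omega
  rw [inversions, hset, card_product, card_Ico, card_singleton, val_last, mul_one]

end cycleIccLast

theorem Av9_eq_image (m : ℕ) :
    Av9 (m + 2) = univ.image fun k => cycleIcc k (last (m + 1)) := by
  ext π
  rw [mem_Av9_iff, mem_image]
  refine ⟨fun h => ⟨_, mem_univ _, (eq_cycleIcc_last_of_strictMono h).symm⟩, ?_⟩
  rintro ⟨k, -, rfl⟩
  exact strictMono_cycleIcc_last_comp_castSucc k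

theorem genPoly_Av9 (m : ℕ) : genPoly (Av9 (m + 2)) = ∑ k ∈ range (m + 2), X ^ k := by
  have hinj : Function.Injective fun k : Fin (m + 2) => cycleIcc k (last (m + 1)) :=
    fun k l h => by simpa [cycleIcc_of_last (le_last _)] using congrArg (· (last (m + 1))) h
  rw [Av9_eq_image, genPoly, sum_image fun k _ l _ h => hinj h, ← Fin.sum_univ_eq_sum_range,
    ← Equiv.sum_comp revPerm]
  refine sum_congr rfl fun k _ => ?_
  rw [revPerm_apply, inversions_cycleIcc_last, val_rev]
  congr 1
  omega

theorem stmt9 {n : ℕ} (hn : 3 ≤ n) :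
    (Av9 n).card = n ∧
    (∀ m : ℕ, ((Av9 n).filter (fun π => inversions π = m)).card =
      if m ≤ n - 1 then 1 else 0) ∧
    genPoly (Av9 n) = ∑ k ∈ Finset.range n, X ^ k := by
  obtain ⟨l, rfl⟩ : ∃ l, n = l + 2 := ⟨n - 2, by omega⟩
  have hpoly := genPoly_Av9 l
  refine ⟨?_, fun m => ?_, hpoly⟩
  · simpa [genPoly_eval_one, eval_finsetSum] using congrArg (eval 1) hpoly
  · have hcoeff := congrArg (coeff · m) hpoly
    simp only [genPoly_coeff, finsetSum_coeff, coeff_X_pow, sum_ite_eq, mem_range] at hcoeff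
    rw [hcoeff]
    split_ifs <;> omega
end

section
/- For n ≥ 4, exactly two permutations of {1,...,n} avoid all of the consecutive patterns 321, 312, 132, 123, and the inversion generating polynomial over this class equals q^{k(k+1)} + q^{k^2} if n = 2k+1 and q^{k(k−1)} + q^{k^2} if n = 2k. -/
open Polynomial
open scoped Classical

noncomputable def Av10 (n : ℕ) : Finset (Equiv.Perm (Fin n)) :=
  Finset.univ.filter (fun π =>
    AvoidsC P321 π ∧ AvoidsC P312 π ∧ AvoidsC P132 π ∧ AvoidsC P123 π)

/-!
Avoiding 321, 312, 132 and 123 consecutively says that in every window of three consecutive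
entries the first lies strictly between the other two. By induction, every entry after the first
is then a new minimum or a new maximum of the entries before it, alternately, starting with a
maximum if `π 0 < π 1` and with a minimum otherwise. Such a permutation is determined by the
relative order of its entries, so exactly two permutations qualify, complements of each other.
A new minimum at position `j` forms an inversion with each of the `j` earlier entries and a new
maximum with none, so their inversion numbers are the sums of the even, resp. odd, numbers below `n`.
-/

open Finset

namespace Equiv.Perm

variable {n : ℕ}

theorem eq_of_forall_lt_iff {π ρ : Perm (Fin n)} (h : ∀ i j, π i < π j ↔ ρ i < ρ j) :
    π = ρ := by
  have hmono : StrictMono (ρ.symm.trans π) := fun a b hab => by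
    simpa [h] using hab
  have hid : ⇑(ρ.symm.trans π) = id :=
    (hmono.range_inj strictMono_id).mp (by simp [Set.range_id])
  ext i : 1
  simpa using congrFun hid (ρ i)

end Equiv.Perm

section Windows

variable {α : Type*} [LinearOrder α]

def FirstBetween (a b c : α) : Prop := (a < b → c < a) ∧ (b < a → a < c)

theorem firstBetween_toDual {a b c : α} :
    FirstBetween (OrderDual.toDual a) (OrderDual.toDual b) (OrderDual.toDual c) ↔
      FirstBetween a b c := by
  simp only [FirstBetween, OrderDual.toDual_lt_toDual]
  exact and_comm

theorem lt_of_firstBetween {f : ℕ → α} {n : ℕ}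
    (hf : ∀ i, i + 2 < n → FirstBetween (f i) (f (i + 1)) (f (i + 2))) (h01 : f 0 < f 1) :
    ∀ m < n, ∀ i < m, (m % 2 = 0 → f m < f i) ∧ (m % 2 = 1 → f i < f m) := by
  intro m
  induction m using Nat.strong_induction_on with
  | _ m ih =>
  intro hm i him
  rcases m with _ | _ | k
  · omega
  · exact ⟨by omega, fun _ => by rwa [show i = 0 by omega]⟩
  · have hk := hf k hm
    have hprev := ih (k + 1) (by omega) (by omega) k (by omega)
    rcases Nat.mod_two_eq_zero_or_one k with hpar | hpar
    · have hlt : f (k + 2) < f k := hk.1 (hprev.2 (by omega))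
      refine ⟨fun _ => ?_, by omega⟩
      rcases (show i < k ∨ i = k ∨ i = k + 1 by omega) with hi | rfl | rfl
      · exact hlt.trans ((ih k (by omega) (by omega) i hi).1 hpar)
      · exact hlt
      · exact hlt.trans (hprev.2 (by omega))
    · have hlt : f k < f (k + 2) := hk.2 (hprev.1 (by omega))
      refine ⟨by omega, fun _ => ?_⟩
      rcases (show i < k ∨ i = k ∨ i = k + 1 by omega) with hi | rfl | rfl
      · exact ((ih k (by omega) (by omega) i hi).2 hpar).trans hlt
      · exact hlt
      · exact (hprev.1 (by omega)).trans hlt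

end Windows

theorem sum_range_even_two_mul_add_one (k : ℕ) :
    ∑ j ∈ range (2 * k + 1), (if j % 2 = 0 then j else 0) = k * (k + 1) := by
  induction k with
  | zero => simp
  | succ k ih =>
    rw [show 2 * (k + 1) + 1 = 2 * k + 1 + 1 + 1 by ring, sum_range_succ, sum_range_succ, ih,
      if_neg (by omega), if_pos (by omega)]
    ring

theorem sum_range_even_two_mul (k : ℕ) :
    ∑ j ∈ range (2 * k), (if j % 2 = 0 then j else 0) = k * (k - 1) := by
  cases k with
  | zero => simp
  | succ k =>
    rw [show 2 * (k + 1) = 2 * k + 1 + 1 by ring, sum_range_succ,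
      sum_range_even_two_mul_add_one, if_neg (by omega), Nat.add_sub_cancel]
    ring

theorem sum_range_odd_two_mul (k : ℕ) :
    ∑ j ∈ range (2 * k), (if j % 2 = 1 then j else 0) = k ^ 2 := by
  induction k with
  | zero => simp
  | succ k ih =>
    rw [show 2 * (k + 1) = 2 * k + 1 + 1 by ring, sum_range_succ, sum_range_succ, ih,
      if_neg (by omega), if_pos (by omega)]
    ring

theorem sum_range_odd_two_mul_add_one (k : ℕ) :
    ∑ j ∈ range (2 * k + 1), (if j % 2 = 1 then j else 0) = k ^ 2 := by
  rw [sum_range_succ, sum_range_odd_two_mul, if_neg (by omega), add_zero]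

open Equiv

section Permutations

variable {n : ℕ}

theorem not_patterns_iff_firstBetween {a b c : ℕ} (hac : a ≠ c) (hbc : b ≠ c) :
    (¬P321 a b c ∧ ¬P312 a b c ∧ ¬P132 a b c ∧ ¬P123 a b c) ↔ FirstBetween a b c := by
  simp only [P321, P312, P132, P123, FirstBetween]
  omega

theorem mem_av10_iff {π : Perm (Fin n)} :
    π ∈ Av10 n ↔ AvoidsC (fun a b c => ¬FirstBetween a b c) π := by
  simp only [Av10, mem_filter, mem_univ, true_and, AvoidsC, ← forall_and, not_not]
  refine forall_congr' fun i => forall_congr' fun hi => not_patterns_iff_firstBetween ?_ ?_ <;>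
    exact fun h => by simpa [Fin.ext_iff] using π.injective (Fin.ext h)

def entry (π : Perm (Fin n)) (i : ℕ) : ℕ :=
  if h : i < n then π ⟨i, h⟩ else 0

theorem entry_of_lt (π : Perm (Fin n)) {i : ℕ} (h : i < n) : entry π i = π ⟨i, h⟩ :=
  dif_pos h

theorem firstBetween_entry {π : Perm (Fin n)} (hπ : π ∈ Av10 n) {i : ℕ} (hi : i + 2 < n) :
    FirstBetween (entry π i) (entry π (i + 1)) (entry π (i + 2)) := by
  rw [entry_of_lt π (by omega), entry_of_lt π (by omega), entry_of_lt π hi]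
  exact not_not.mp (mem_av10_iff.mp hπ ⟨i, by omega⟩ hi)

def IsZigzag (r : ℕ) (π : Perm (Fin n)) : Prop :=
  ∀ i j : Fin n, i < j → (π j < π i ↔ (j : ℕ) % 2 = r)

namespace IsZigzag

variable {r : ℕ} {π ρ : Perm (Fin n)}

theorem lt_iff_of_lt (h : IsZigzag r π) {i j : Fin n} (hij : i < j) :
    π i < π j ↔ (j : ℕ) % 2 ≠ r := by
  rw [← not_le, (π.injective.ne hij.ne').le_iff_lt, h i j hij]

theorem eq (hπ : IsZigzag r π) (hρ : IsZigzag r ρ) : π = ρ :=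
  Perm.eq_of_forall_lt_iff fun i j => by
    rcases lt_trichotomy i j with hij | rfl | hji
    · rw [hπ.lt_iff_of_lt hij, hρ.lt_iff_of_lt hij]
    · simp
    · rw [hπ j i hji, hρ j i hji]

theorem ne (hπ : IsZigzag 0 π) (hρ : IsZigzag 1 ρ) (hn : 2 ≤ n) : π ≠ ρ := by
  rintro rfl
  have h01 : (⟨0, by omega⟩ : Fin n) < ⟨1, by omega⟩ := by simp [Fin.lt_def]
  simpa using (hπ _ _ h01).symm.trans (hρ _ _ h01)

theorem trans_revPerm (h : IsZigzag 0 π) : IsZigzag 1 (π.trans Fin.revPerm) := by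
  intro i j hij
  simp only [Equiv.trans_apply, Fin.revPerm_apply, Fin.rev_lt_rev]
  rw [h.lt_iff_of_lt hij]
  omega

theorem mem_av10 (h : IsZigzag r π) (hr : r < 2) : π ∈ Av10 n := by
  rw [mem_av10_iff]
  intro i hi hbad
  have h01 : i < ⟨i + 1, by omega⟩ := by simp [Fin.lt_def]
  have h02 : i < ⟨i + 2, hi⟩ := by simp [Fin.lt_def]
  have hdown01 := h _ _ h01
  have hdown02 := h _ _ h02
  have hup01 := h.lt_iff_of_lt h01
  have hup02 := h.lt_iff_of_lt h02
  simp only [FirstBetween, Fin.lt_def] at hbad hdown01 hdown02 hup01 hup02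
  omega

theorem inversions_eq (h : IsZigzag r π) :
    inversions π = ∑ j ∈ range n, if j % 2 = r then j else 0 := by
  rw [inversions, card_filter, Fintype.sum_prod_type_right,
    ← Fin.sum_univ_eq_sum_range (fun j => if j % 2 = r then j else 0)]
  refine sum_congr rfl fun j _ => ?_
  rw [← card_filter]
  split_ifs with hj
  · convert Fin.card_Iio j using 2
    ext i
    simp only [mem_filter, mem_univ, true_and, mem_Iio]
    exact ⟨And.left, fun hij => ⟨hij, (h i j hij).2 hj⟩⟩
  · rw [card_eq_zero, filter_eq_empty_iff]
    exact fun i _ ⟨hij, hlt⟩ => hj ((h i j hij).1 hlt)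

end IsZigzag

theorem isZigzag_of_mem_av10 {π : Perm (Fin n)} (hπ : π ∈ Av10 n) (hn : 2 ≤ n) :
    IsZigzag 0 π ∨ IsZigzag 1 π := by
  have hne : entry π 0 ≠ entry π 1 := by
    rw [entry_of_lt π (by omega), entry_of_lt π (by omega)]
    exact Fin.val_injective.ne (π.injective.ne (by simp))
  rcases hne.lt_or_gt with h01 | h10
  · left
    intro i j hij
    have := lt_of_firstBetween (fun _ => firstBetween_entry hπ) h01 j j.2 i hij
    simp only [entry, Fin.is_lt, dif_pos, Fin.eta, Fin.lt_def] at this ⊢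
    omega
  · right
    intro i j hij
    have := lt_of_firstBetween (f := fun i => OrderDual.toDual (entry π i))
      (fun _ hi => firstBetween_toDual.mpr (firstBetween_entry hπ hi)) (OrderDual.toDual_lt_toDual.mpr h10)
      j j.2 i hij
    simp only [OrderDual.toDual_lt_toDual, entry, Fin.is_lt, dif_pos, Fin.eta, Fin.lt_def]
      at this ⊢
    omega

noncomputable def upDownPerm (n : ℕ) : Perm (Fin n) :=
  Equiv.ofBijective
    (fun i => ⟨if (i : ℕ) % 2 = 0 then (n - 1) / 2 - i / 2 else (n - 1) / 2 + (i + 1) / 2,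
      by split <;> omega⟩)
    (Finite.injective_iff_bijective.mp fun i j hij => by
      simp only [Fin.mk.injEq] at hij
      ext
      split_ifs at hij <;> omega)

noncomputable def downUpPerm (n : ℕ) : Perm (Fin n) :=
  (upDownPerm n).trans Fin.revPerm

theorem isZigzag_upDownPerm : IsZigzag 0 (upDownPerm n) := by
  intro i j hij
  simp only [upDownPerm, Equiv.ofBijective_apply, Fin.lt_def] at hij ⊢
  split_ifs <;> omega

theorem isZigzag_downUpPerm : IsZigzag 1 (downUpPerm n) :=
  isZigzag_upDownPerm.trans_revPerm

theorem av10_eq (hn : 2 ≤ n) : Av10 n = {upDownPerm n, downUpPerm n} := by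
  ext π
  simp only [mem_insert, mem_singleton]
  constructor
  · intro hπ
    exact (isZigzag_of_mem_av10 hπ hn).imp (·.eq isZigzag_upDownPerm)
      (·.eq isZigzag_downUpPerm)
  · rintro (rfl | rfl)
    exacts [isZigzag_upDownPerm.mem_av10 zero_lt_two, isZigzag_downUpPerm.mem_av10 one_lt_two]

end Permutations

theorem stmt10 {n : ℕ} (hn : 4 ≤ n) :
    (Av10 n).card = 2 ∧
    ∀ k : ℕ,
      (n = 2 * k + 1 → genPoly (Av10 n) = X ^ (k * (k + 1)) + X ^ (k ^ 2)) ∧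
      (n = 2 * k → genPoly (Av10 n) = X ^ (k * (k - 1)) + X ^ (k ^ 2)) := by
  have hne : upDownPerm n ≠ downUpPerm n :=
    isZigzag_upDownPerm.ne isZigzag_downUpPerm (by omega)
  have hpoly : genPoly (Av10 n) = X ^ (∑ j ∈ range n, if j % 2 = 0 then j else 0) +
      X ^ (∑ j ∈ range n, if j % 2 = 1 then j else 0) := by
    rw [av10_eq (by omega), genPoly, sum_pair hne, isZigzag_upDownPerm.inversions_eq,
      isZigzag_downUpPerm.inversions_eq]
  refine ⟨by rw [av10_eq (by omega), card_pair hne], fun k => ⟨?_, ?_⟩⟩ <;> rintro rfl <;>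
    rw [hpoly]
  · rw [sum_range_even_two_mul_add_one, sum_range_odd_two_mul_add_one]
  · rw [sum_range_even_two_mul, sum_range_odd_two_mul]
end

section
/- Let I_n(q) = Σ q^{inv(π)} over all permutations π of {1,...,n} that avoid both consecutive patterns 321 and 312. Then for n ≥ 2, I_n(q) = I_{n−1}(q) + (q + q^2 + ⋯ + q^{n−1}) · I_{n−2}(q), with I_0(q) = I_1(q) = 1. -/
open Polynomial
open scoped Classical

noncomputable def I12 (n : ℕ) : Polynomial ℕ :=
  genPoly (Finset.univ.filter (fun π : Equiv.Perm (Fin n) => AvoidsC P321 π ∧ AvoidsC P312 π))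

/-!
A permutation avoids both consecutive patterns 321 and 312 exactly when every entry is
smaller than one of the next two entries, so its maximum sits in one of the last two
positions. Split a permutation of length `n` into its last value `j` and the standardization
of the remaining entries. If `j = n`, the rest is an arbitrary avoider of length `n - 1`.
Otherwise `n` occupies position `n - 1`, and removing it leaves an arbitrary avoider of
length `n - 2`; the final entry `j` contributes `n - j ∈ [1, n - 1]` inversions.
-/

open Finset Equiv

lemma snoc_apply_eq_dite {α : Type*} {n : ℕ} (f : Fin n → α) (a : α) (i : Fin (n + 1)) :
    Fin.snoc (α := fun _ => α) f a i = if h : (i : ℕ) < n then f ⟨i, h⟩ else a := by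
  simp [Fin.snoc, Fin.castLT]

section ExceededWithinTwo

variable {α β : Type*} [LinearOrder α] [LinearOrder β]

def ExceededWithinTwo {n : ℕ} (f : Fin n → α) : Prop :=
  ∀ i : Fin n, ∀ h : (i : ℕ) + 2 < n, f i < f ⟨i + 1, by omega⟩ ∨ f i < f ⟨i + 2, h⟩

lemma exceededWithinTwo_comp_iff {n : ℕ} {g : α → β} (hg : StrictMono g) (f : Fin n → α) :
    ExceededWithinTwo (g ∘ f) ↔ ExceededWithinTwo f := by
  simp only [ExceededWithinTwo, Function.comp_apply, hg.lt_iff_lt]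

lemma exceededWithinTwo_snoc_iff {n : ℕ} {f : Fin n → α} {a : α} (ha : ∀ i, f i < a) :
    ExceededWithinTwo (Fin.snoc f a : Fin (n + 1) → α) ↔ ExceededWithinTwo f := by
  refine ⟨fun hf i h => ?_, fun hf i h => ?_⟩
  · simpa [snoc_apply_eq_dite, show (i : ℕ) + 1 < n by omega, h] using
      hf i.castSucc (by simp only [Fin.val_castSucc]; omega)
  · simp only [snoc_apply_eq_dite, dif_pos (show (i : ℕ) < n by omega),
      dif_pos (show (i : ℕ) + 1 < n by omega)]
    split_ifs with h2
    · exact hf ⟨i, _⟩ h2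
    · exact Or.inr (ha _)

lemma exceededWithinTwo_snoc_snoc_iff {n : ℕ} {f : Fin n → α} {a b : α}
    (ha : ∀ i, f i < a) :
    ExceededWithinTwo (Fin.snoc (Fin.snoc f a) b : Fin (n + 2) → α) ↔ ExceededWithinTwo f := by
  refine ⟨fun hf i h => ?_, fun hf i h => ?_⟩
  · simpa [snoc_apply_eq_dite, show (i : ℕ) + 1 < n by omega, h, h.le] using
      hf i.castSucc.castSucc (by simp only [Fin.val_castSucc]; omega)
  · simp only [snoc_apply_eq_dite, dif_pos (show (i : ℕ) < n + 1 by omega),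
      dif_pos (show (i : ℕ) < n by omega)]
    split_ifs <;> first
      | omega | exact hf ⟨i, _⟩ (by omega) | exact Or.inl (ha _) | exact Or.inr (ha _)

lemma ExceededWithinTwo.le_add_two_of_forall_le {n : ℕ} {f : Fin n → α}
    (hf : ExceededWithinTwo f) {i : Fin n} (hi : ∀ k, f k ≤ f i) : n ≤ i + 2 := by
  by_contra! h
  rcases hf i h with h' | h' <;> exact (hi _).not_gt h'

end ExceededWithinTwo

lemma avoids321_and_avoids312_iff {n : ℕ} (π : Perm (Fin n)) :
    AvoidsC P321 π ∧ AvoidsC P312 π ↔ ExceededWithinTwo π := by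
  simp only [AvoidsC, ExceededWithinTwo, P321, P312, ← forall_and]
  refine forall_congr' fun i => forall_congr' fun h => ?_
  have h01 := π.injective.ne (a₁ := i) (a₂ := ⟨i + 1, by omega⟩) (by simp [Fin.ext_iff])
  have h02 := π.injective.ne (a₁ := i) (a₂ := ⟨i + 2, h⟩) (by simp [Fin.ext_iff])
  have h12 := π.injective.ne (a₁ := ⟨i + 1, by omega⟩) (a₂ := ⟨i + 2, h⟩)
    (by simp [Fin.ext_iff])
  simp only [Fin.lt_def, ne_eq, Fin.ext_iff] at *
  omega

section SnocPerm

variable {m : ℕ}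

def snocPerm (j : Fin (m + 1)) (σ : Perm (Fin m)) : Perm (Fin (m + 1)) :=
  ((finSuccEquiv' (Fin.last m)).trans (optionCongr σ)).trans (finSuccEquiv' j).symm

@[simp] lemma snocPerm_last (j : Fin (m + 1)) (σ : Perm (Fin m)) :
    snocPerm j σ (Fin.last m) = j := by
  simp [snocPerm]

@[simp] lemma snocPerm_castSucc (j : Fin (m + 1)) (σ : Perm (Fin m)) (k : Fin m) :
    snocPerm j σ k.castSucc = j.succAbove (σ k) := by
  simp [snocPerm, finSuccEquiv'_last_apply_castSucc]

lemma coe_snocPerm (j : Fin (m + 1)) (σ : Perm (Fin m)) :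
    ⇑(snocPerm j σ) = Fin.snoc (fun k => j.succAbove (σ k)) j := by
  ext i
  induction i using Fin.lastCases <;> simp

lemma snocPerm_injective :
    Function.Injective fun x : Fin (m + 1) × Perm (Fin m) => snocPerm x.1 x.2 := by
  rintro ⟨j, σ⟩ ⟨j', σ'⟩ h
  have hj : j = j' := by simpa using congr($h (Fin.last m))
  subst hj
  refine Prod.ext rfl (Equiv.ext fun k => ?_)
  simpa using congr($h k.castSucc)

lemma snocPerm_bijective :
    Function.Bijective fun x : Fin (m + 1) × Perm (Fin m) => snocPerm x.1 x.2 :=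
  (Fintype.bijective_iff_injective_and_card _).mpr
    ⟨snocPerm_injective, by simp [Fintype.card_perm, Nat.factorial_succ]⟩

lemma sum_perm_eq_sum_snocPerm {M : Type*} [AddCommMonoid M] (f : Perm (Fin (m + 1)) → M) :
    ∑ π, f π = ∑ j, ∑ σ, f (snocPerm j σ) := by
  rw [← Fintype.sum_prod_type', snocPerm_bijective.sum_comp f]

lemma inversions_eq_sum_card {n : ℕ} (π : Perm (Fin n)) :
    inversions π = ∑ q, #{p | p < q ∧ π q < π p} := by
  rw [inversions, ← univ_product_univ, card_filter, sum_product_right]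
  simp only [card_filter]

lemma inversions_snocPerm (j : Fin (m + 1)) (σ : Perm (Fin m)) :
    inversions (snocPerm j σ) = inversions σ + (m - j) := by
  have last_term :
      #{p | p < Fin.last m ∧ snocPerm j σ (Fin.last m) < snocPerm j σ p} = m - j := by
    calc #{p | p < Fin.last m ∧ snocPerm j σ (Fin.last m) < snocPerm j σ p}
        = #{p | j < snocPerm j σ p} := by
          rw [snocPerm_last]
          congr 1
          refine filter_congr fun p _ => and_iff_right_of_imp fun h => ?_
          refine Fin.lt_last_iff_ne_last.mpr fun hp => ?_
          simp [hp] at h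
      _ = #(Ioi j) := card_equiv (snocPerm j σ) (by simp)
      _ = m - j := by simp
  rw [inversions_eq_sum_card, inversions_eq_sum_card, Fin.sum_univ_castSucc, last_term]
  congr 1
  refine sum_congr rfl fun k _ => ?_
  rw [card_filter, card_filter, Fin.sum_univ_castSucc]
  simp [Fin.succAbove_lt_succAbove_iff, (Fin.castSucc_lt_last k).not_gt]

lemma exceededWithinTwo_snocPerm_last_iff (σ : Perm (Fin m)) :
    ExceededWithinTwo (snocPerm (Fin.last m) σ) ↔ ExceededWithinTwo σ := by
  simp only [coe_snocPerm, Fin.succAbove_last]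
  rw [exceededWithinTwo_snoc_iff fun k => Fin.castSucc_lt_last _]
  exact exceededWithinTwo_comp_iff Fin.strictMono_castSucc σ

lemma exceededWithinTwo_snocPerm_snocPerm_last_iff (j : Fin (m + 2)) (σ : Perm (Fin m)) :
    ExceededWithinTwo (snocPerm j (snocPerm (Fin.last m) σ)) ↔ ExceededWithinTwo σ := by
  have hmono : StrictMono (j.succAbove ∘ Fin.castSucc) :=
    (Fin.strictMono_succAbove j).comp Fin.strictMono_castSucc
  rw [coe_snocPerm, show (fun k => j.succAbove (snocPerm (Fin.last m) σ k)) =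
      j.succAbove ∘ Fin.snoc (fun k => Fin.castSucc (σ k)) (Fin.last m) by
    simp only [coe_snocPerm, Fin.succAbove_last]; rfl, Fin.comp_snoc]
  exact (exceededWithinTwo_snoc_snoc_iff fun k =>
      Fin.strictMono_succAbove j (Fin.castSucc_lt_last (σ k))).trans
    (exceededWithinTwo_comp_iff hmono σ)

lemma snocPerm_last_of_exceededWithinTwo {j : Fin (m + 1)} {ρ : Perm (Fin (m + 1))}
    (h : ExceededWithinTwo (snocPerm j.castSucc ρ)) : ρ (Fin.last m) = Fin.last m := by
  obtain ⟨p, hp⟩ := (snocPerm j.castSucc ρ).surjective (Fin.last (m + 1))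
  have hp_ge : m ≤ p := by
    have := h.le_add_two_of_forall_le (i := p) fun k => hp ▸ Fin.le_last _
    omega
  induction p using Fin.lastCases with
  | last => simp at hp
  | cast q =>
    obtain rfl : q = Fin.last m := Fin.ext <| by
      rw [Fin.val_castSucc] at hp_ge
      rw [Fin.val_last]
      omega
    rw [snocPerm_castSucc, Fin.succAbove_eq_last_iff (Fin.castSucc_lt_last j).ne] at hp
    exact hp

end SnocPerm

lemma sum_fin_sub_eq_sum_Icc {M : Type*} [AddCommMonoid M] (f : ℕ → M) :
    ∀ n : ℕ, ∑ j : Fin n, f (n - j) = ∑ k ∈ Icc 1 n, f k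
  | 0 => by simp
  | n + 1 => by
    rw [Fin.sum_univ_succ, sum_Icc_succ_top (by omega), ← sum_fin_sub_eq_sum_Icc f n, add_comm]
    simp

lemma I12_eq_sum_ite (n : ℕ) :
    I12 n = ∑ π : Perm (Fin n), if ExceededWithinTwo π then X ^ inversions π else 0 := by
  simp only [I12, genPoly, avoids321_and_avoids312_iff, sum_filter]

lemma inversions_eq_zero_of_le_one {n : ℕ} (hn : n ≤ 1) (π : Perm (Fin n)) :
    inversions π = 0 :=
  card_eq_zero.mpr <| filter_eq_empty_iff.mpr fun p _ h => by
    have := p.2.isLt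
    have := Fin.lt_def.mp h.1
    omega

lemma I12_of_le_one {n : ℕ} (hn : n ≤ 1) : I12 n = 1 := by
  calc I12 n = ∑ _π : Perm (Fin n), (1 : ℕ[X]) := by
        refine (I12_eq_sum_ite n).trans (sum_congr rfl fun π _ => ?_)
        rw [if_pos (show ExceededWithinTwo π from fun i h => by omega),
          inversions_eq_zero_of_le_one hn, pow_zero]
    _ = 1 := by simp [Fintype.card_perm, Nat.factorial_eq_one.mpr hn]

lemma I12_add_two (m : ℕ) :
    I12 (m + 2) = I12 (m + 1) + (∑ k ∈ Icc 1 (m + 1), X ^ k) * I12 m := by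
  rw [I12_eq_sum_ite, sum_perm_eq_sum_snocPerm, Fin.sum_univ_castSucc, add_comm,
    ← sum_fin_sub_eq_sum_Icc, sum_mul]
  congr 1
  · simp [I12_eq_sum_ite, exceededWithinTwo_snocPerm_last_iff, inversions_snocPerm]
  · refine sum_congr rfl fun j _ => ?_
    rw [sum_perm_eq_sum_snocPerm, sum_eq_single (Fin.last m)]
    · simp [I12_eq_sum_ite, exceededWithinTwo_snocPerm_snocPerm_last_iff, inversions_snocPerm,
        mul_sum, pow_add, mul_comm]
    · intro k _ hk
      refine sum_eq_zero fun σ _ => if_neg fun h => hk ?_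
      simpa using snocPerm_last_of_exceededWithinTwo h
    · simp

theorem stmt12 :
    I12 0 = 1 ∧ I12 1 = 1 ∧
    ∀ n : ℕ, 2 ≤ n →
      I12 n = I12 (n - 1) + (∑ k ∈ Finset.Icc 1 (n - 1), X ^ k) * I12 (n - 2) := by
  refine ⟨I12_of_le_one zero_le_one, I12_of_le_one le_rfl, fun n hn => ?_⟩
  obtain ⟨m, rfl⟩ := Nat.exists_eq_add_of_le' hn
  exact I12_add_two m
end
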